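/- Consider an adversarial K-armed bandit over T₂ rounds with oblivious losses l_{j,t} ∈ [0,1], initial cumulative losses L_{j,0} ∈ [0, N'] satisfying ∑_{j=1}^K L_{j,0}² ≤ K·N'²/2, importance-weighted loss estimates, weights w_{j,t} = exp(−η_t·L_{j,t−1}) with η_t = √(ln K/(tK)), and arm j_t drawn proportionally to w_{j,t}. Then for every fixed arm j', E[∑_{t=1}^{T₂} l_{j_t,t} − ∑_{t=1}^{T₂} l_{j',t}] ≤ 2√(T₂·K·ln K) + (N'²/4)·√(ln K/K) + N'. -/

import Mathlib

/-!
Along every arm sequence, the potential `Φ_t = -(1/η) log ∑_j exp (-η L_{j,t})` of the exponential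
weights grows in each round by at least the weighted mean of the loss estimates minus `η/2` times
their weighted second moment (from `e^{-x} ≤ 1 - x + x²/2` and `log y ≤ y - 1`), and by the
monotonicity of power means, decreasing `η` from `η_t` to `η_{t+1}` costs at most
`log K (1/η_{t+1} - 1/η_t)`. Telescoping between `Φ ≥ -log K / η_1` (the initial losses are
nonnegative) and `Φ ≤ L_{j',T}` bounds the loss of the forecaster by
`L_{j',T} + ∑_t (η_t/2) l_{j_t,t}² / p_{j_t,t} + log K / η_T`.
In expectation the importance-weighted estimates are unbiased, so
`E L_{j',T} = L_{j',0} + ∑_t l_{j',t}` with `L_{j',0} ≤ N'`, and `E [l_{j_t,t}² / p_{j_t,t}] = ∑_a l_{a,t}² ≤ K`. Finally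
`∑_t η_t ≤ 2 √(T ln K / K)` and `log K / η_T = √(T K ln K)`.
-/

/-- Learning rate at (0-indexed) step `t`: `η_{t+1} = √(ln K / ((t+1)·K))`. -/
noncomputable def bbtaEta (K t : ℕ) : ℝ := Real.sqrt (Real.log K / ((t + 1) * K))

/-- Cumulative importance-weighted losses `L_{j,t}` of the exponentially weighted
forecaster, given initial losses `L0`, oblivious losses `l`, and the sequence `js`
of selected arms: `L_{j,t} = L_{j,t-1} + (l_{j,t}/p_{j,t})·1{j = j_t}`, where
`p_{j,t} ∝ exp(-η_t · L_{j,t-1})`. -/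
noncomputable def bbtaCumLoss (K : ℕ) (L0 : Fin K → ℝ) (l : ℕ → Fin K → ℝ)
    (js : ℕ → Fin K) : ℕ → Fin K → ℝ
  | 0 => L0
  | t + 1 => fun j =>
      bbtaCumLoss K L0 l js t j +
        if j = js t then
          l t j /
            (Real.exp (-(bbtaEta K t) * bbtaCumLoss K L0 l js t j) /
              ∑ j', Real.exp (-(bbtaEta K t) * bbtaCumLoss K L0 l js t j'))
        else 0

/-- Selection probability `p_{j,t}` of arm `j` at step `t` (exponential weighting). -/
noncomputable def bbtaProb (K : ℕ) (L0 : Fin K → ℝ) (l : ℕ → Fin K → ℝ)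
    (js : ℕ → Fin K) (t : ℕ) (j : Fin K) : ℝ :=
  Real.exp (-(bbtaEta K t) * bbtaCumLoss K L0 l js t j) /
    ∑ j', Real.exp (-(bbtaEta K t) * bbtaCumLoss K L0 l js t j')

/-- Extend a finite arm sequence to `ℕ` using a default arm. -/
def extSeq {K T : ℕ} (js : Fin T → Fin K) (j0 : Fin K) : ℕ → Fin K :=
  fun t => if h : t < T then js ⟨t, h⟩ else j0

open Finset Real

lemma exp_neg_le_one_sub_add_sq_div_two {x : ℝ} (hx : 0 ≤ x) : exp (-x) ≤ 1 - x + x ^ 2 / 2 := by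
  rw [exp_neg, inv_le_iff_one_le_mul₀ (exp_pos x)]
  nlinarith [quadratic_le_exp_of_nonneg hx, exp_pos x, sq_nonneg (x - 1), sq_nonneg x]

section ExpWeights

variable {ι : Type*} [Fintype ι]

noncomputable def expWeights (η : ℝ) (L : ι → ℝ) (j : ι) : ℝ :=
  exp (-η * L j) / ∑ i, exp (-η * L i)

noncomputable def expPotential (η : ℝ) (L : ι → ℝ) : ℝ :=
  -log (∑ i, exp (-η * L i)) / η

variable {η : ℝ} {L M : ι → ℝ}

lemma expPotential_le (hη : 0 < η) (L : ι → ℝ) (j : ι) : expPotential η L ≤ L j := by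
  have hj : -η * L j ≤ log (∑ i, exp (-η * L i)) := by
    rw [← log_exp (-η * L j)]
    exact log_le_log (exp_pos _)
      (single_le_sum (f := fun i => exp (-η * L i)) (fun i _ => (exp_pos _).le) (mem_univ j))
  rw [expPotential, div_le_iff₀ hη]
  linarith

variable [Nonempty ι]

lemma sum_exp_pos (f : ι → ℝ) : 0 < ∑ i, exp (f i) :=
  sum_pos (fun _ _ => exp_pos _) univ_nonempty

lemma expWeights_pos (η : ℝ) (L : ι → ℝ) (j : ι) : 0 < expWeights η L j :=
  div_pos (exp_pos _) (sum_exp_pos _)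

lemma sum_expWeights (η : ℝ) (L : ι → ℝ) : ∑ j, expWeights η L j = 1 := by
  unfold expWeights
  rw [← sum_div, div_self (sum_exp_pos _).ne']

lemma neg_log_card_div_le_expPotential (hη : 0 < η) (hL : 0 ≤ L) :
    -log (Fintype.card ι) / η ≤ expPotential η L := by
  have hsum : ∑ i, exp (-η * L i) ≤ Fintype.card ι := by
    calc ∑ i, exp (-η * L i) ≤ ∑ _i : ι, (1 : ℝ) :=
          sum_le_sum fun i _ => exp_le_one_iff.mpr (by nlinarith [show (0 : ℝ) ≤ L i from hL i])
      _ = Fintype.card ι := by simp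
  rw [expPotential, div_le_div_iff_of_pos_right hη, neg_le_neg_iff]
  exact log_le_log (sum_exp_pos _) hsum

/-- Monotonicity of power means: `η ↦ expPotential η L + log |ι| / η` is nonincreasing. -/
lemma expPotential_sub_le {a b : ℝ} (ha : 0 < a) (hab : a ≤ b) (L : ι → ℝ) :
    expPotential b L - log (Fintype.card ι) * (a⁻¹ - b⁻¹) ≤ expPotential a L := by
  have hb : 0 < b := ha.trans_le hab
  have hn : (0 : ℝ) < Fintype.card ι := Nat.cast_pos.mpr Fintype.card_pos
  have hpow : ∀ i, exp (-a * L i) ^ (b / a) = exp (-b * L i) := fun i => by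
    rw [← exp_mul]; congr 1; field_simp
  have hmean : ((∑ i, exp (-a * L i)) / Fintype.card ι) ^ (b / a)
      ≤ (∑ i, exp (-b * L i)) / Fintype.card ι := by
    have := rpow_arith_mean_le_arith_mean_rpow univ (fun _ => (Fintype.card ι : ℝ)⁻¹)
      (fun i => exp (-a * L i)) (fun _ _ => by positivity)
      (by simp only [sum_const, card_univ, nsmul_eq_mul]; exact mul_inv_cancel₀ hn.ne')
      (fun i _ => (exp_pos _).le) ((one_le_div ha).mpr hab)
    simp_rw [hpow, ← mul_sum, inv_mul_eq_div] at this
    exact this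
  have hlog := log_le_log (by positivity) hmean
  rw [log_rpow (div_pos (sum_exp_pos _) hn), log_div (sum_exp_pos _).ne' hn.ne',
    log_div (sum_exp_pos _).ne' hn.ne', div_mul_eq_mul_div, div_le_iff₀ ha] at hlog
  have hlog' : (log (∑ i, exp (-a * L i)) - log (Fintype.card ι)) / a
      ≤ (log (∑ i, exp (-b * L i)) - log (Fintype.card ι)) / b := by
    rw [div_le_div_iff₀ ha hb]; linarith
  rw [expPotential, expPotential]
  linear_combination hlog'

lemma sum_exp_neg_mul_le (hη : 0 ≤ η) (hLM : L ≤ M) :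
    ∑ j, exp (-η * M j) ≤ (∑ i, exp (-η * L i)) * (1 - η * ∑ j, expWeights η L j * (M j - L j)
      + η ^ 2 / 2 * ∑ j, expWeights η L j * (M j - L j) ^ 2) := by
  set W := ∑ i, exp (-η * L i) with hW_def
  have hW : W ≠ 0 := (sum_exp_pos _).ne'
  calc ∑ j, exp (-η * M j)
      ≤ ∑ j, exp (-η * L j) * (1 - η * (M j - L j) + η ^ 2 / 2 * (M j - L j) ^ 2) := by
        refine sum_le_sum fun j _ => ?_
        have hx := exp_neg_le_one_sub_add_sq_div_two (mul_nonneg hη (sub_nonneg.mpr (hLM j)))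
        rw [show -η * M j = -η * L j + -(η * (M j - L j)) by ring, exp_add]
        exact mul_le_mul_of_nonneg_left (hx.trans_eq (by ring)) (exp_pos _).le
    _ = W * ∑ j, expWeights η L j * (1 - η * (M j - L j) + η ^ 2 / 2 * (M j - L j) ^ 2) := by
        rw [mul_sum]
        refine sum_congr rfl fun j _ => ?_
        rw [expWeights, ← hW_def]
        field_simp
    _ = W * (∑ j, expWeights η L j - η * ∑ j, expWeights η L j * (M j - L j)
          + η ^ 2 / 2 * ∑ j, expWeights η L j * (M j - L j) ^ 2) := by
        congr 1
        rw [mul_sum, mul_sum, ← sum_sub_distrib, ← sum_add_distrib]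
        exact sum_congr rfl fun j _ => by ring
    _ = _ := by rw [sum_expWeights]

lemma expPotential_add_sub_le (hη : 0 < η) (hLM : L ≤ M) :
    expPotential η L + ∑ j, expWeights η L j * (M j - L j)
      - η / 2 * ∑ j, expWeights η L j * (M j - L j) ^ 2 ≤ expPotential η M := by
  set Q := 1 - η * ∑ j, expWeights η L j * (M j - L j)
    + η ^ 2 / 2 * ∑ j, expWeights η L j * (M j - L j) ^ 2
  have hM := sum_exp_neg_mul_le hη.le hLM
  have hQ : 0 < Q := pos_of_mul_pos_right ((sum_exp_pos _).trans_le hM) (sum_exp_pos _).le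
  have hlog : log (∑ j, exp (-η * M j)) ≤ log (∑ i, exp (-η * L i)) + (Q - 1) :=
    calc log (∑ j, exp (-η * M j)) ≤ log ((∑ i, exp (-η * L i)) * Q) :=
          log_le_log (sum_exp_pos _) hM
      _ = log (∑ i, exp (-η * L i)) + log Q := log_mul (sum_exp_pos _).ne' hQ.ne'
      _ ≤ log (∑ i, exp (-η * L i)) + (Q - 1) := by linarith [log_le_sub_one_of_pos hQ]
  rw [expPotential, expPotential, le_div_iff₀ hη, sub_mul, add_mul, div_mul_cancel₀ _ hη.ne']
  linear_combination hlog

variable {η : ℕ → ℝ} {L : ℕ → ι → ℝ}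

lemma expPotential_telescope (hη : ∀ t, 0 < η t) (hη_anti : Antitone η)
    (hL : ∀ t, L t ≤ L (t + 1)) (n : ℕ) :
    expPotential (η 0) (L 0)
      + ∑ t ∈ range (n + 1), (∑ j, expWeights (η t) (L t) j * (L (t + 1) j - L t j)
        - η t / 2 * ∑ j, expWeights (η t) (L t) j * (L (t + 1) j - L t j) ^ 2)
      - log (Fintype.card ι) * ((η n)⁻¹ - (η 0)⁻¹)
      ≤ expPotential (η n) (L (n + 1)) := by
  induction n with
  | zero =>
    have hstep := expPotential_add_sub_le (hη 0) (hL 0)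
    simp only [zero_add, sum_range_one, sub_self, mul_zero, sub_zero]
    linarith
  | succ n ih =>
    have hmix := expPotential_sub_le (hη (n + 1)) (hη_anti n.le_succ) (L (n + 1))
    have hstep := expPotential_add_sub_le (hη (n + 1)) (hL (n + 1))
    rw [sum_range_succ]
    linarith

theorem expWeights_regret_le (hη : ∀ t, 0 < η t) (hη_anti : Antitone η) (hL0 : 0 ≤ L 0)
    (hL : ∀ t, L t ≤ L (t + 1)) (n : ℕ) (j : ι) :
    ∑ t ∈ range (n + 1), ∑ i, expWeights (η t) (L t) i * (L (t + 1) i - L t i)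
      ≤ L (n + 1) j
        + ∑ t ∈ range (n + 1), η t / 2 * ∑ i, expWeights (η t) (L t) i * (L (t + 1) i - L t i) ^ 2
        + log (Fintype.card ι) / η n := by
  have hstart := neg_log_card_div_le_expPotential (hη 0) hL0
  have htel := expPotential_telescope hη hη_anti hL n
  have hend := expPotential_le (hη n) (L (n + 1)) j
  rw [sum_sub_distrib] at htel
  rw [div_eq_mul_inv] at hstart ⊢
  linarith

end ExpWeights

section ImportanceWeighting

variable {ι : Type*} [DecidableEq ι]

/-- The estimate of `y j` after arm `a` was drawn from `q`. -/
noncomputable def importanceWeighted (q y : ι → ℝ) (a j : ι) : ℝ :=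
  if j = a then y j / q j else 0

variable {q y : ι → ℝ}

lemma importanceWeighted_nonneg (hq : 0 ≤ q) (hy : 0 ≤ y) (a j : ι) :
    0 ≤ importanceWeighted q y a j := by
  unfold importanceWeighted
  split_ifs
  exacts [div_nonneg (hy j) (hq j), le_rfl]

variable [Fintype ι]

lemma sum_mul_importanceWeighted {a : ι} (hq : q a ≠ 0) :
    ∑ j, q j * importanceWeighted q y a j = y a := by
  simp only [importanceWeighted, mul_ite, mul_zero, sum_ite_eq', mem_univ, if_true]
  exact mul_div_cancel₀ _ hq

lemma sum_mul_importanceWeighted_sq {a : ι} (hq : q a ≠ 0) :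
    ∑ j, q j * importanceWeighted q y a j ^ 2 = y a ^ 2 / q a := by
  simp only [importanceWeighted, ite_pow, zero_pow two_ne_zero, mul_ite, mul_zero, sum_ite_eq',
    mem_univ, if_true]
  field_simp

lemma importanceWeighted_unbiased {j : ι} (hq : q j ≠ 0) :
    ∑ a, q a * importanceWeighted q y a j = y j := by
  simp only [importanceWeighted, mul_ite, mul_zero, sum_ite_eq, mem_univ, if_true]
  exact mul_div_cancel₀ _ hq

end ImportanceWeighting

def IsNonanticipating {α β : Type*} (f : (ℕ → α) → ℕ → β) : Prop :=
  ∀ ⦃u v : ℕ → α⦄ ⦃t : ℕ⦄, (∀ s < t, u s = v s) → f u t = f v t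

section PathExpectation

variable {K : ℕ}

lemma extSeq_apply_fin {T : ℕ} (js : Fin T → Fin K) (j0 : Fin K) (t : Fin T) :
    extSeq js j0 t = js t := by
  simp [extSeq]

lemma extSeq_snoc {n : ℕ} (js : Fin n → Fin K) (a j0 : Fin K) :
    extSeq (Fin.snoc js a) j0 = Function.update (extSeq js j0) n a := by
  funext s
  rcases lt_trichotomy s n with hs | rfl | hs
  · simp [extSeq, hs, hs.ne, hs.trans n.lt_succ_self, Fin.snoc, Fin.castLT]
  · simp [extSeq, Fin.snoc]
  · simp [extSeq, hs.ne', hs.not_gt, (Nat.succ_le_of_lt hs).not_gt]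

variable (p : (ℕ → Fin K) → ℕ → Fin K → ℝ) (j0 : Fin K)

/-- Expectation of `F` when the arms of rounds `0, …, n - 1` are drawn one after the other from
the policy `p`; the path is continued by `j0` afterwards. -/
noncomputable def pathExpect (n : ℕ) (F : (ℕ → Fin K) → ℝ) : ℝ :=
  ∑ js : Fin n → Fin K, (∏ t : Fin n, p (extSeq js j0) t (js t)) * F (extSeq js j0)

variable {p j0} {n : ℕ}

lemma pathExpect_succ (hp : IsNonanticipating p) (F : (ℕ → Fin K) → ℝ) :
    pathExpect p j0 (n + 1) F
      = pathExpect p j0 n (fun u => ∑ a, p u n a * F (Function.update u n a)) := by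
  rw [pathExpect, ← (Fin.snocEquiv fun _ => Fin K).sum_comp, Fintype.sum_prod_type, sum_comm]
  refine sum_congr rfl fun js _ => ?_
  rw [mul_sum]
  refine sum_congr rfl fun a _ => ?_
  have hsnoc : (Fin.snocEquiv (fun _ => Fin K) (a, js) : Fin (n + 1) → Fin K) = Fin.snoc js a := rfl
  have hagree : ∀ s < n, Function.update (extSeq js j0) n a s = extSeq js j0 s :=
    fun s hs => Function.update_of_ne hs.ne _ _
  rw [hsnoc, extSeq_snoc, Fin.prod_univ_castSucc]
  simp only [Fin.snoc_castSucc, Fin.snoc_last, Fin.val_castSucc, Fin.val_last]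
  rw [hp hagree, prod_congr rfl fun t _ => by rw [hp fun s hs => hagree s (hs.trans t.isLt)]]
  ring

lemma pathExpect_const (hp : IsNonanticipating p) (hsum : ∀ u t, ∑ a, p u t a = 1) (c : ℝ) :
    pathExpect p j0 n (fun _ => c) = c := by
  induction n with
  | zero => simp [pathExpect]
  | succ n ih => simp_rw [pathExpect_succ hp, ← sum_mul, hsum, one_mul, ih]

lemma pathExpect_add (F G : (ℕ → Fin K) → ℝ) :
    pathExpect p j0 n (fun u => F u + G u) = pathExpect p j0 n F + pathExpect p j0 n G := by
  simp only [pathExpect, mul_add, sum_add_distrib]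

lemma pathExpect_const_mul (c : ℝ) (F : (ℕ → Fin K) → ℝ) :
    pathExpect p j0 n (fun u => c * F u) = c * pathExpect p j0 n F := by
  simp only [pathExpect, mul_sum, mul_left_comm]

lemma pathExpect_sum {ι : Type*} (s : Finset ι) (F : ι → (ℕ → Fin K) → ℝ) :
    pathExpect p j0 n (fun u => ∑ i ∈ s, F i u) = ∑ i ∈ s, pathExpect p j0 n (F i) := by
  simp only [pathExpect, mul_sum]
  exact sum_comm

lemma pathExpect_mono (hp_nonneg : ∀ u t a, 0 ≤ p u t a) {F G : (ℕ → Fin K) → ℝ}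
    (hFG : ∀ u, F u ≤ G u) :
    pathExpect p j0 n F ≤ pathExpect p j0 n G :=
  sum_le_sum fun _ _ => mul_le_mul_of_nonneg_left (hFG _) (prod_nonneg fun _ _ => hp_nonneg _ _ _)

/-- Tower property: condition on the arms drawn before round `t`. -/
lemma pathExpect_apply_eq (hp : IsNonanticipating p) (hsum : ∀ u t, ∑ a, p u t a = 1) {t : ℕ}
    (htn : t < n) (φ : (Fin K → ℝ) → Fin K → ℝ) {c : ℝ}
    (hφ : ∀ u, ∑ a, p u t a * φ (p u t) a = c) :
    pathExpect p j0 n (fun u => φ (p u t) (u t)) = c := by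
  induction n with
  | zero => omega
  | succ n ih =>
    rw [pathExpect_succ hp]
    rcases Nat.lt_succ_iff_lt_or_eq.mp htn with ht_lt | rfl
    · have hupd : ∀ u a,
          φ (p (Function.update u n a) t) (Function.update u n a t) = φ (p u t) (u t) :=
        fun u a => by
          rw [hp fun s hs => Function.update_of_ne (hs.trans ht_lt).ne _ _,
            Function.update_of_ne ht_lt.ne]
      simp_rw [hupd, ← sum_mul, hsum, one_mul]
      exact ih ht_lt
    · have hupd : ∀ u a, φ (p (Function.update u t a) t) (Function.update u t a t) = φ (p u t) a :=
        fun u a => by rw [hp fun s hs => Function.update_of_ne hs.ne _ _, Function.update_self]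
      simp_rw [hupd, hφ]
      exact pathExpect_const hp hsum c

lemma pathExpect_div_apply (hp : IsNonanticipating p) (hsum : ∀ u t, ∑ a, p u t a = 1)
    (hp_ne : ∀ u t a, p u t a ≠ 0) {t : ℕ} (htn : t < n) (y : Fin K → ℝ) :
    pathExpect p j0 n (fun u => y (u t) / p u t (u t)) = ∑ a, y a :=
  pathExpect_apply_eq hp hsum htn (fun q a => y a / q a) fun u =>
    sum_congr rfl fun a _ => mul_div_cancel₀ _ (hp_ne u t a)

lemma pathExpect_importanceWeighted (hp : IsNonanticipating p) (hsum : ∀ u t, ∑ a, p u t a = 1)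
    (hp_ne : ∀ u t a, p u t a ≠ 0) {t : ℕ} (htn : t < n) (y : Fin K → ℝ) (j : Fin K) :
    pathExpect p j0 n (fun u => importanceWeighted (p u t) y (u t) j) = y j :=
  pathExpect_apply_eq hp hsum htn (fun q a => importanceWeighted q y a j) fun u =>
    importanceWeighted_unbiased (hp_ne u t j)

lemma pathExpect_sum_mul_div_apply (hp : IsNonanticipating p) (hsum : ∀ u t, ∑ a, p u t a = 1)
    (hp_ne : ∀ u t a, p u t a ≠ 0) (c : ℕ → ℝ) (y : ℕ → Fin K → ℝ) :
    pathExpect p j0 n (fun u => ∑ t ∈ range n, c t * (y t (u t) / p u t (u t)))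
      = ∑ t ∈ range n, c t * ∑ a, y t a := by
  rw [pathExpect_sum]
  refine sum_congr rfl fun t ht => ?_
  rw [pathExpect_const_mul, pathExpect_div_apply hp hsum hp_ne (mem_range.mp ht)]

lemma pathExpect_sum_range (f : ℕ → Fin K → ℝ) :
    pathExpect p j0 n (fun u => ∑ t ∈ range n, f t (u t))
      = ∑ js : Fin n → Fin K,
          (∏ t : Fin n, p (extSeq js j0) t (js t)) * ∑ t : Fin n, f t (js t) := by
  refine sum_congr rfl fun js _ => ?_
  dsimp only
  rw [← Fin.sum_univ_eq_sum_range (fun t => f t (extSeq js j0 t))]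
  simp only [extSeq_apply_fin]

end PathExpectation

section LearningRate

lemma inv_sqrt_add_one_le {x : ℝ} (hx : 0 ≤ x) : (√(x + 1))⁻¹ ≤ 2 * (√(x + 1) - √x) := by
  have ha : 0 < √(x + 1) := sqrt_pos.mpr (by positivity)
  have hb := sqrt_nonneg x
  have ha2 := sq_sqrt (by positivity : 0 ≤ x + 1)
  have hb2 := sq_sqrt hx
  rw [inv_le_iff_one_le_mul₀ ha]
  nlinarith [sq_nonneg (√(x + 1) - √x)]

lemma sum_range_inv_sqrt_add_one_le (T : ℕ) : ∑ t ∈ range T, (√((t : ℝ) + 1))⁻¹ ≤ 2 * √T := by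
  calc ∑ t ∈ range T, (√((t : ℝ) + 1))⁻¹ ≤ ∑ t ∈ range T, 2 * (√((t : ℝ) + 1) - √t) :=
        sum_le_sum fun t _ => inv_sqrt_add_one_le t.cast_nonneg
    _ = 2 * √T := by
        have h := sum_range_sub (fun t : ℕ => √(t : ℝ)) T
        push_cast at h
        rw [← mul_sum, h, sqrt_zero, sub_zero]

variable {K : ℕ}

lemma bbtaEta_pos (hK : 1 < K) (t : ℕ) : 0 < bbtaEta K t :=
  sqrt_pos.mpr (div_pos (log_pos (by exact_mod_cast hK)) (by positivity))

lemma bbtaEta_antitone (hK : 0 < K) : Antitone (bbtaEta K) := fun s t hst =>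
  sqrt_le_sqrt (div_le_div_of_nonneg_left (log_natCast_nonneg K) (by positivity) (by gcongr))

lemma log_div_bbtaEta (hK : 1 < K) (n : ℕ) :
    log K / bbtaEta K n = √((n + 1) * K * log K) := by
  have hlog : 0 < log K := log_pos (by exact_mod_cast hK)
  have hc : (0 : ℝ) < (n + 1) * K := by positivity
  rw [bbtaEta, sqrt_div hlog.le, div_div_eq_mul_div, sqrt_mul hc.le, mul_comm (log K),
    mul_div_assoc, div_sqrt]

lemma sum_bbtaEta_mul_le (hK : 0 < K) (T : ℕ) :
    ∑ t ∈ range T, bbtaEta K t / 2 * K ≤ √(T * K * log K) := by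
  have hη : ∀ t : ℕ, bbtaEta K t = √(log K / K) * (√((t : ℝ) + 1))⁻¹ := fun t => by
    rw [bbtaEta, mul_comm _ (K : ℝ), ← div_div, sqrt_div' _ (by positivity), div_eq_mul_inv]
  have hK' : (K : ℝ) * √(log K / K) = √(K * log K) := by
    rw [show (K : ℝ) * log K = K ^ 2 * (log K / K) by field_simp, sqrt_mul (sq_nonneg _),
      sqrt_sq (Nat.cast_nonneg K)]
  calc ∑ t ∈ range T, bbtaEta K t / 2 * K
      = K / 2 * √(log K / K) * ∑ t ∈ range T, (√((t : ℝ) + 1))⁻¹ := by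
        simp only [hη, mul_sum]
        exact sum_congr rfl fun t _ => by ring
    _ ≤ K / 2 * √(log K / K) * (2 * √T) := by gcongr; exact sum_range_inv_sqrt_add_one_le T
    _ = √(T * K * log K) := by
        rw [mul_assoc (T : ℝ), sqrt_mul (Nat.cast_nonneg T), ← hK']
        ring

end LearningRate

section Bbta

variable {K : ℕ} {L0 : Fin K → ℝ} {l : ℕ → Fin K → ℝ}

lemma bbtaCumLoss_succ (u : ℕ → Fin K) (t : ℕ) :
    bbtaCumLoss K L0 l u (t + 1)
      = bbtaCumLoss K L0 l u t + importanceWeighted (bbtaProb K L0 l u t) (l t) (u t) :=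
  rfl

lemma bbtaCumLoss_eq_add_sum (u : ℕ → Fin K) (n : ℕ) (j : Fin K) :
    bbtaCumLoss K L0 l u n j
      = L0 j + ∑ t ∈ range n, importanceWeighted (bbtaProb K L0 l u t) (l t) (u t) j := by
  induction n with
  | zero => simp [bbtaCumLoss]
  | succ n ih => rw [bbtaCumLoss_succ, Pi.add_apply, ih, sum_range_succ, add_assoc]

lemma bbtaCumLoss_congr {u v : ℕ → Fin K} {t : ℕ} (h : ∀ s < t, u s = v s) :
    bbtaCumLoss K L0 l u t = bbtaCumLoss K L0 l v t := by
  induction t with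
  | zero => rfl
  | succ t ih =>
    have ih' := ih fun s hs => h s (hs.trans t.lt_succ_self)
    have hprob : bbtaProb K L0 l u t = bbtaProb K L0 l v t := by
      unfold bbtaProb; rw [ih']
    rw [bbtaCumLoss_succ, bbtaCumLoss_succ, ih', hprob, h t t.lt_succ_self]

lemma isNonanticipating_bbtaProb : IsNonanticipating (bbtaProb K L0 l) := fun _ _ _ h => by
  unfold bbtaProb; rw [bbtaCumLoss_congr h]

variable [NeZero K]

lemma bbtaProb_pos (u : ℕ → Fin K) (t : ℕ) (j : Fin K) : 0 < bbtaProb K L0 l u t j :=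
  expWeights_pos _ _ j

lemma sum_bbtaProb (u : ℕ → Fin K) (t : ℕ) : ∑ j, bbtaProb K L0 l u t j = 1 :=
  sum_expWeights _ _

lemma pathExpect_bbtaCumLoss (j0 : Fin K) (n : ℕ) (j : Fin K) :
    pathExpect (bbtaProb K L0 l) j0 n (fun u => bbtaCumLoss K L0 l u n j)
      = L0 j + ∑ t ∈ range n, l t j := by
  simp_rw [bbtaCumLoss_eq_add_sum, pathExpect_add, pathExpect_sum,
    pathExpect_const isNonanticipating_bbtaProb sum_bbtaProb]
  congr 1
  refine sum_congr rfl fun t ht => ?_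
  exact pathExpect_importanceWeighted isNonanticipating_bbtaProb sum_bbtaProb
    (fun u t a => (bbtaProb_pos u t a).ne') (mem_range.mp ht) (l t) j

lemma bbtaCumLoss_le_succ (hl : ∀ t j, 0 ≤ l t j) (u : ℕ → Fin K) (t : ℕ) :
    bbtaCumLoss K L0 l u t ≤ bbtaCumLoss K L0 l u (t + 1) := by
  rw [bbtaCumLoss_succ]
  exact le_add_of_nonneg_right
    (importanceWeighted_nonneg (fun j => (bbtaProb_pos u t j).le) (hl t) _)

lemma bbta_loss_le (hK : 1 < K) (hl : ∀ t j, 0 ≤ l t j) (hL0 : 0 ≤ L0) (u : ℕ → Fin K) (n : ℕ)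
    (j : Fin K) :
    ∑ t ∈ range (n + 1), l t (u t)
      ≤ bbtaCumLoss K L0 l u (n + 1) j
        + ∑ t ∈ range (n + 1), bbtaEta K t / 2 * (l t (u t) ^ 2 / bbtaProb K L0 l u t (u t))
        + log K / bbtaEta K n := by
  have h := expWeights_regret_le (bbtaEta_pos hK) (bbtaEta_antitone (zero_lt_one.trans hK)) hL0
    (bbtaCumLoss_le_succ hl u) n j
  have hinc : ∀ t i, bbtaCumLoss K L0 l u (t + 1) i - bbtaCumLoss K L0 l u t i
      = importanceWeighted (bbtaProb K L0 l u t) (l t) (u t) i := fun t i => by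
    rw [bbtaCumLoss_succ, Pi.add_apply, add_sub_cancel_left]
  have hprob : ∀ t, expWeights (bbtaEta K t) (bbtaCumLoss K L0 l u t) = bbtaProb K L0 l u t :=
    fun _ => rfl
  simp only [hinc, hprob, Fintype.card_fin,
    sum_mul_importanceWeighted (bbtaProb_pos _ _ _).ne',
    sum_mul_importanceWeighted_sq (bbtaProb_pos _ _ _).ne'] at h
  exact h

lemma pathExpect_bbta_regret_le (hK : 1 < K) (hl : ∀ t j, 0 ≤ l t j) (hL0 : 0 ≤ L0)
    (j' : Fin K) (n : ℕ) :
    pathExpect (bbtaProb K L0 l) j' (n + 1) (fun u => ∑ t ∈ range (n + 1), (l t (u t) - l t j'))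
      ≤ L0 j' + ∑ t ∈ range (n + 1), bbtaEta K t / 2 * ∑ a, l t a ^ 2 + log K / bbtaEta K n := by
  have hp : IsNonanticipating (bbtaProb K L0 l) := isNonanticipating_bbtaProb
  calc pathExpect (bbtaProb K L0 l) j' (n + 1)
        (fun u => ∑ t ∈ range (n + 1), (l t (u t) - l t j'))
      ≤ pathExpect (bbtaProb K L0 l) j' (n + 1) (fun u => bbtaCumLoss K L0 l u (n + 1) j'
          + ∑ t ∈ range (n + 1), bbtaEta K t / 2 * (l t (u t) ^ 2 / bbtaProb K L0 l u t (u t))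
          + (log K / bbtaEta K n - ∑ t ∈ range (n + 1), l t j')) :=
        pathExpect_mono (fun u t a => (bbtaProb_pos u t a).le) fun u => by
          have := bbta_loss_le hK hl hL0 u n j'
          rw [sum_sub_distrib]
          linarith
    _ = L0 j' + ∑ t ∈ range (n + 1), bbtaEta K t / 2 * ∑ a, l t a ^ 2 + log K / bbtaEta K n := by
        rw [pathExpect_add, pathExpect_add, pathExpect_bbtaCumLoss,
          pathExpect_const hp sum_bbtaProb, pathExpect_sum_mul_div_apply hp sum_bbtaProb
            (fun u t a => (bbtaProb_pos u t a).ne') _ fun t a => l t a ^ 2]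
        ring

lemma sum_bbtaEta_mul_sum_sq_le (hl : ∀ t j, l t j ∈ Set.Icc (0 : ℝ) 1) (T : ℕ) :
    ∑ t ∈ range T, bbtaEta K t / 2 * ∑ a, l t a ^ 2 ≤ √(T * K * log K) := by
  refine (sum_le_sum fun t _ => ?_).trans (sum_bbtaEta_mul_le (Nat.pos_of_neZero K) T)
  have hsq : ∑ a, l t a ^ 2 ≤ ∑ _a : Fin K, (1 : ℝ) :=
    sum_le_sum fun a _ => pow_le_one₀ (hl t a).1 (hl t a).2
  rw [sum_const, card_univ, Fintype.card_fin, nsmul_one] at hsq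
  exact mul_le_mul_of_nonneg_left hsq (div_nonneg (sqrt_nonneg _) zero_le_two)

end Bbta

theorem bbta_single_context_regret_general (K T₂ N' : ℕ) (hK : 2 ≤ K)
    (l : ℕ → Fin K → ℝ) (hl : ∀ t j, l t j ∈ Set.Icc (0 : ℝ) 1)
    (L0 : Fin K → ℝ) (hL0 : ∀ j, L0 j ∈ Set.Icc (0 : ℝ) (N' : ℝ))
    (j' : Fin K) :
    ∑ js : Fin T₂ → Fin K,
        (∏ t : Fin T₂, bbtaProb K L0 l (extSeq js j') t (js t)) *
          (∑ t : Fin T₂, (l t (js t) - l t j'))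
      ≤ 2 * Real.sqrt (T₂ * K * Real.log K)
        + ((N' : ℝ) ^ 2 / 4) * Real.sqrt (Real.log K / K) + N' := by
  have : NeZero K := ⟨by omega⟩
  have hextra : 0 ≤ ((N' : ℝ) ^ 2 / 4) * √(log K / K) := by positivity
  rcases T₂ with _ | n
  · simp only [univ_unique, univ_eq_empty, sum_empty, prod_empty, mul_zero, sum_const,
      card_singleton, one_smul]
    positivity
  rw [← pathExpect_sum_range (fun t a => l t a - l t j')]
  have hregret := pathExpect_bbta_regret_le (by omega) (fun t j => (hl t j).1)
    (fun j => (hL0 j).1) j' n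
  have hvar := sum_bbtaEta_mul_sum_sq_le hl (n + 1)
  have hlog := log_div_bbtaEta (by omega : 1 < K) n
  push_cast at hvar ⊢
  linarith [(hL0 j').2]

/-- Lemma 1 (single-context regret bound of BBTA): the expected regret of the
exponentially weighted forecaster with importance-weighted loss estimates,
time-varying learning rate `η_t = √(ln K/(tK))`, and initial losses `L_{j,0}`
from the pure exploration phase, against any fixed arm `j'`, is at most
`2√(T₂·K·ln K) + (N'²/4)·√(ln K/K) + N'`. -/
theorem bbta_single_context_regret (K T₂ N' : ℕ) (hK : 2 ≤ K)
    (l : ℕ → Fin K → ℝ) (hl : ∀ t j, l t j ∈ Set.Icc (0 : ℝ) 1)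
    (L0 : Fin K → ℝ) (hL0 : ∀ j, L0 j ∈ Set.Icc (0 : ℝ) (N' : ℝ))
    (hL0sq : ∑ j, (L0 j) ^ 2 ≤ K * N' ^ 2 / 2)
    (j' : Fin K) :
    ∑ js : Fin T₂ → Fin K,
        (∏ t : Fin T₂, bbtaProb K L0 l (extSeq js j') t (js t)) *
          (∑ t : Fin T₂, (l t (js t) - l t j'))
      ≤ 2 * Real.sqrt (T₂ * K * Real.log K)
        + ((N' : ℝ) ^ 2 / 4) * Real.sqrt (Real.log K / K) + N' :=
  bbta_single_context_regret_general K T₂ N' hK l hl L0 hL0 j'
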